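/- arXiv:2308.08844 — 2 statements merged into one kernel-verified Lean document; each statement's English description precedes it below -/
import Mathlib

section
/- Let $A \in \mathbb{R}^{N \times N}$ ($N \ge 2$) be a matrix with real eigenvalues, all nonpositive, with $0$ a simple eigenvalue, and suppose there exist positive weights $V_1, \dots, V_N$ such that $\Gamma A = 0$ where $\Gamma = (V_1, \dots, V_N)$. Define $\tilde{A} \in \mathbb{R}^{(N-1)\times(N-1)}$ by $(\tilde{A})_{ij} := (A)_{ij} - (A)_{iN} \frac{V_j}{V_N}$ for $1 \le i, j \le N-1$. Then every strictly negative eigenvalue $\lambda$ of $A$ is an eigenvalue of $\tilde{A}$; consequently $\tilde{A}$ has $N-1$ strictly negative eigenvalues (counted with multiplicity and assuming $A$ is diagonalizable), and $\tilde{A}$ is Hurwitz. -/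
/-!
Since `V ᵥ* A = 0`, the range of `A` lies in the hyperplane `H = {x | V ⬝ᵥ x = 0}`, and `Ã` is the
matrix of `A` restricted to `H` in the coordinates `x₁, …, x_N`, the last coordinate being recovered
as `-(∑ V_j x_j) / V_{N+1}`. An eigenvector of `A` for a nonzero eigenvalue lies in `H`, so its first
`N` coordinates form an eigenvector of `Ã`; conversely every eigenvector of `Ã` lifts to one of `A`,
so the spectrum of `Ã` consists of nonpositive reals. Finally `0` is not an eigenvalue of `Ã`: the
rank condition forces `range A = H`, and diagonalizability gives `ker A ∩ range A = 0`, so `A` is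
injective on `H`.
-/

open Matrix Module.End

namespace Matrix

section Diagonalizable

variable {R ι : Type*} [CommRing R] [Fintype ι] [DecidableEq ι]

theorem IsDiag.mulVec_eq_zero_of_mulVec_mulVec_eq_zero [NoZeroDivisors R] {D : Matrix ι ι R}
    (hD : D.IsDiag) {z : ι → R} (h : D *ᵥ (D *ᵥ z) = 0) : D *ᵥ z = 0 := by
  rw [← hD.diagonal_diag] at h ⊢
  ext i
  have hi := congrFun h i
  simp only [mulVec_diagonal, Pi.zero_apply] at hi ⊢
  exact mul_self_eq_zero.mp (by linear_combination z i * hi)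

theorem mulVec_eq_zero_of_mulVec_mulVec_eq_zero [NoZeroDivisors R] {M P : Matrix ι ι R}
    (hP : IsUnit P) (hPM : (P⁻¹ * M * P).IsDiag) {w : ι → R} (h : M *ᵥ (M *ᵥ w) = 0) :
    M *ᵥ w = 0 := by
  have hdet : IsUnit P.det := (isUnit_iff_isUnit_det P).mp hP
  set D := P⁻¹ * M * P
  have hMP : ∀ v, M *ᵥ (P *ᵥ v) = P *ᵥ (D *ᵥ v) := fun v => by
    simp only [D, mulVec_mulVec, ← mul_assoc, mul_nonsing_inv _ hdet, one_mul]
  have hP_inj : ∀ v, P *ᵥ v = 0 → v = 0 := fun v hv => by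
    rw [← one_mulVec v, ← nonsing_inv_mul _ hdet, ← mulVec_mulVec, hv, mulVec_zero]
  obtain ⟨z, rfl⟩ : ∃ z, P *ᵥ z = w :=
    ⟨P⁻¹ *ᵥ w, by rw [mulVec_mulVec, mul_nonsing_inv _ hdet, one_mulVec]⟩
  have hDDz : D *ᵥ (D *ᵥ z) = 0 := hP_inj _ (by rw [← hMP, ← hMP, h])
  rw [hMP, hPM.mulVec_eq_zero_of_mulVec_mulVec_eq_zero hDDz, mulVec_zero]

end Diagonalizable

variable {K : Type*} [Field K]

theorem hasEigenvalue_toLin'_iff {ι : Type*} [Fintype ι] [DecidableEq ι] {M : Matrix ι ι K}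
    {μ : K} : HasEigenvalue (toLin' M) μ ↔ ∃ x ≠ 0, M *ᵥ x = μ • x := by
  refine ⟨fun h => ?_, fun ⟨x, hx0, hx⟩ => ?_⟩
  · obtain ⟨x, hx⟩ := h.exists_hasEigenvector
    exact ⟨x, hx.2, by simpa using hx.apply_eq_smul⟩
  · exact hasEigenvalue_of_hasEigenvector ⟨mem_eigenspace_iff.mpr (by simpa using hx), hx0⟩

variable {n : ℕ}

/-- Inverse of `Fin.init` on the hyperplane `V ⬝ᵥ x = 0`: the last coordinate is solved for. -/
def kernelLift (V : Fin (n + 1) → K) : Matrix (Fin (n + 1)) (Fin n) K :=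
  of fun i j => Fin.lastCases (-V j.castSucc / V (Fin.last n)) (fun i => (1 : Matrix _ _ K) i j) i

def reducedMatrix (A : Matrix (Fin (n + 1)) (Fin (n + 1)) K) (V : Fin (n + 1) → K) :
    Matrix (Fin n) (Fin n) K :=
  of fun i j =>
    A i.castSucc j.castSucc - A i.castSucc (Fin.last n) * V j.castSucc / V (Fin.last n)

variable {V : Fin (n + 1) → K}

@[simp]
theorem kernelLift_castSucc (i j : Fin n) :
    kernelLift V i.castSucc j = (1 : Matrix _ _ K) i j := by
  simp [kernelLift]

@[simp]
theorem kernelLift_last (j : Fin n) :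
    kernelLift V (Fin.last n) j = -V j.castSucc / V (Fin.last n) := by
  simp [kernelLift]

@[simp]
theorem init_kernelLift_mulVec (y : Fin n → K) : Fin.init (kernelLift V *ᵥ y) = y := by
  ext i
  simp [Fin.init, mulVec, dotProduct, one_apply]

theorem kernelLift_mulVec_last (y : Fin n → K) :
    (kernelLift V *ᵥ y) (Fin.last n) = -(∑ j, V j.castSucc * y j) / V (Fin.last n) := by
  simp [mulVec, dotProduct, Finset.sum_div, neg_div, div_mul_eq_mul_div]

theorem kernelLift_mulVec_init (hV : V (Fin.last n) ≠ 0) {x : Fin (n + 1) → K}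
    (hx : V ⬝ᵥ x = 0) : kernelLift V *ᵥ Fin.init x = x := by
  ext i
  induction i using Fin.lastCases with
  | last =>
    rw [dotProduct, Fin.sum_univ_castSucc] at hx
    rw [kernelLift_mulVec_last]
    field_simp
    simp only [Fin.init]
    linear_combination -hx
  | cast i => exact congrFun (init_kernelLift_mulVec (Fin.init x)) i

theorem kernelLift_mulVec_injective : Function.Injective (kernelLift V *ᵥ ·) := fun y z h => by
  simpa using congrArg Fin.init h

theorem reducedMatrix_eq_submatrix (A : Matrix (Fin (n + 1)) (Fin (n + 1)) K) :
    reducedMatrix A V = (A * kernelLift V).submatrix Fin.castSucc id := by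
  ext i j
  simp only [reducedMatrix, of_apply, submatrix_apply, id_eq, mul_apply, Fin.sum_univ_castSucc,
    kernelLift_castSucc, kernelLift_last, one_apply, mul_ite, mul_one, mul_zero,
    Finset.sum_ite_eq', Finset.mem_univ, if_true]
  ring

theorem reducedMatrix_mulVec (A : Matrix (Fin (n + 1)) (Fin (n + 1)) K) (y : Fin n → K) :
    reducedMatrix A V *ᵥ y = Fin.init (A *ᵥ (kernelLift V *ᵥ y)) := by
  rw [reducedMatrix_eq_submatrix, mulVec_mulVec]
  rfl

theorem reducedMatrix_map {L : Type*} [Field L] (f : K →+* L)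
    (A : Matrix (Fin (n + 1)) (Fin (n + 1)) K) :
    (reducedMatrix A V).map f = reducedMatrix (A.map f) (f ∘ V) := by
  ext i j
  simp [reducedMatrix]

variable {A : Matrix (Fin (n + 1)) (Fin (n + 1)) K}

theorem dotProduct_mulVec_eq_zero (hΓ : V ᵥ* A = 0) (x : Fin (n + 1) → K) :
    V ⬝ᵥ (A *ᵥ x) = 0 := by
  rw [dotProduct_mulVec, hΓ, zero_dotProduct]

theorem reducedMatrix_mulVec_init (hV : V (Fin.last n) ≠ 0) {x : Fin (n + 1) → K}
    (hx : V ⬝ᵥ x = 0) : reducedMatrix A V *ᵥ Fin.init x = Fin.init (A *ᵥ x) := by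
  rw [reducedMatrix_mulVec, kernelLift_mulVec_init hV hx]

theorem mulVec_kernelLift_mulVec (hV : V (Fin.last n) ≠ 0) (hΓ : V ᵥ* A = 0) (y : Fin n → K) :
    A *ᵥ (kernelLift V *ᵥ y) = kernelLift V *ᵥ (reducedMatrix A V *ᵥ y) := by
  rw [reducedMatrix_mulVec, kernelLift_mulVec_init hV (dotProduct_mulVec_eq_zero hΓ _)]

theorem hasEigenvalue_reducedMatrix (hV : V (Fin.last n) ≠ 0) (hΓ : V ᵥ* A = 0) {μ : K}
    (hμ : μ ≠ 0) (h : HasEigenvalue (toLin' A) μ) :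
    HasEigenvalue (toLin' (reducedMatrix A V)) μ := by
  obtain ⟨x, hx0, hAx⟩ := hasEigenvalue_toLin'_iff.mp h
  have hx : V ⬝ᵥ x = 0 := by
    have : μ * (V ⬝ᵥ x) = 0 := by
      rw [← smul_eq_mul, ← dotProduct_smul, ← hAx, dotProduct_mulVec_eq_zero hΓ]
    exact (mul_eq_zero.mp this).resolve_left hμ
  refine hasEigenvalue_toLin'_iff.mpr ⟨Fin.init x, fun h0 => hx0 ?_, ?_⟩
  · rw [← kernelLift_mulVec_init hV hx, h0, mulVec_zero]
  · rw [reducedMatrix_mulVec_init hV hx, hAx]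
    rfl

theorem spectrum_reducedMatrix_subset (hV : V (Fin.last n) ≠ 0) (hΓ : V ᵥ* A = 0) :
    spectrum K (reducedMatrix A V) ⊆ spectrum K A := by
  intro μ hμ
  rw [← spectrum_toLin', ← hasEigenvalue_iff_mem_spectrum, hasEigenvalue_toLin'_iff] at hμ ⊢
  obtain ⟨y, hy0, hy⟩ := hμ
  refine ⟨kernelLift V *ᵥ y, fun h0 => hy0 (kernelLift_mulVec_injective (V := V) ?_), ?_⟩
  · simpa using h0
  · rw [mulVec_kernelLift_mulVec hV hΓ, hy, mulVec_smul]

theorem range_mulVecLin_eq_range_kernelLift (hV : V (Fin.last n) ≠ 0) (hΓ : V ᵥ* A = 0)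
    (hrank : A.rank = n) :
    LinearMap.range A.mulVecLin = LinearMap.range (kernelLift V).mulVecLin := by
  apply Submodule.eq_of_le_of_finrank_eq
  · rintro _ ⟨w, rfl⟩
    exact ⟨Fin.init (A *ᵥ w), kernelLift_mulVec_init hV (dotProduct_mulVec_eq_zero hΓ w)⟩
  · rw [← Matrix.rank, hrank, LinearMap.finrank_range_of_inj kernelLift_mulVec_injective,
      Module.finrank_fin_fun]

theorem isUnit_reducedMatrix (hV : V (Fin.last n) ≠ 0) (hΓ : V ᵥ* A = 0) (hrank : A.rank = n)
    (hsq : ∀ w, A *ᵥ (A *ᵥ w) = 0 → A *ᵥ w = 0) : IsUnit (reducedMatrix A V) := by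
  rw [← mulVec_injective_iff_isUnit, ← coe_mulVecLin, ← LinearMap.ker_eq_bot,
    LinearMap.ker_eq_bot']
  intro y hy
  rw [mulVecLin_apply] at hy
  have hker : A *ᵥ (kernelLift V *ᵥ y) = 0 := by
    rw [mulVec_kernelLift_mulVec hV hΓ, hy, mulVec_zero]
  obtain ⟨w, hw⟩ : kernelLift V *ᵥ y ∈ LinearMap.range A.mulVecLin := by
    rw [range_mulVecLin_eq_range_kernelLift hV hΓ hrank]
    exact ⟨y, rfl⟩
  rw [mulVecLin_apply] at hw
  rw [← init_kernelLift_mulVec (V := V) y, ← hw, hsq w (by rw [hw, hker]), Fin.init_def]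
  rfl

end Matrix

theorem stmt4_general {N : ℕ}
    (A : Matrix (Fin (N + 1)) (Fin (N + 1)) ℝ)
    (hreal : ∀ μ ∈ spectrum ℂ (A.map (algebraMap ℝ ℂ)), μ.im = 0 ∧ μ.re ≤ 0)
    (hdiag : ∃ Pm : Matrix (Fin (N + 1)) (Fin (N + 1)) ℝ,
        IsUnit Pm ∧ (Pm⁻¹ * A * Pm).IsDiag)
    (hrank : A.rank = N)
    (V : Fin (N + 1) → ℝ) (hV : ∀ i, 0 < V i)
    (hΓ : Matrix.vecMul V A = 0)
    (Atil : Matrix (Fin N) (Fin N) ℝ)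
    (hAtil : ∀ i j : Fin N, Atil i j =
      A i.castSucc j.castSucc - A i.castSucc (Fin.last N) * V j.castSucc / V (Fin.last N)) :
    (∀ lam : ℝ, lam < 0 → Module.End.HasEigenvalue (Matrix.toLin' A) lam →
        Module.End.HasEigenvalue (Matrix.toLin' Atil) lam) ∧
      (∀ μ ∈ spectrum ℂ (Atil.map (algebraMap ℝ ℂ)), μ.re < 0) := by
  obtain rfl : Atil = reducedMatrix A V := Matrix.ext hAtil
  have hVN : V (Fin.last N) ≠ 0 := (hV _).ne'
  refine ⟨fun lam hlam => hasEigenvalue_reducedMatrix hVN hΓ hlam.ne, fun μ hμ => ?_⟩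
  have hμ0 : μ ≠ 0 := by
    rintro rfl
    obtain ⟨P, hP, hPA⟩ := hdiag
    have hunit := isUnit_reducedMatrix hVN hΓ hrank
      fun _ => mulVec_eq_zero_of_mulVec_mulVec_eq_zero hP hPA
    exact (spectrum.zero_mem_iff ℂ).mp hμ (hunit.map (algebraMap ℝ ℂ).mapMatrix)
  have hΓℂ : (algebraMap ℝ ℂ ∘ V) ᵥ* A.map (algebraMap ℝ ℂ) = 0 := by
    ext i
    rw [← RingHom.map_vecMul, hΓ, Pi.zero_apply, map_zero, Pi.zero_apply]
  rw [reducedMatrix_map] at hμ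
  obtain ⟨him, hre⟩ := hreal μ (spectrum_reducedMatrix_subset (by simpa using hVN) hΓℂ hμ)
  exact hre.lt_of_ne fun h => hμ0 (Complex.ext h him)

/-- Lemma 3: if the diagonalizable matrix `A` has real nonpositive eigenvalues with `0`
a simple eigenvalue (rank `N`), and positive weights `V` satisfy `Γ A = 0`, then every
strictly negative eigenvalue of `A` is an eigenvalue of the reduced matrix `Ã`, and
`Ã` is Hurwitz. -/
theorem stmt4 {N : ℕ} (hN : 1 ≤ N)
    (A : Matrix (Fin (N + 1)) (Fin (N + 1)) ℝ)
    (hreal : ∀ μ ∈ spectrum ℂ (A.map (algebraMap ℝ ℂ)), μ.im = 0 ∧ μ.re ≤ 0)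
    (hdiag : ∃ Pm : Matrix (Fin (N + 1)) (Fin (N + 1)) ℝ,
        IsUnit Pm ∧ (Pm⁻¹ * A * Pm).IsDiag)
    (hrank : A.rank = N)
    (V : Fin (N + 1) → ℝ) (hV : ∀ i, 0 < V i)
    (hΓ : Matrix.vecMul V A = 0)
    (Atil : Matrix (Fin N) (Fin N) ℝ)
    (hAtil : ∀ i j : Fin N, Atil i j =
      A i.castSucc j.castSucc - A i.castSucc (Fin.last N) * V j.castSucc / V (Fin.last N)) :
    (∀ lam : ℝ, lam < 0 → Module.End.HasEigenvalue (Matrix.toLin' A) lam →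
        Module.End.HasEigenvalue (Matrix.toLin' Atil) lam) ∧
      (∀ μ ∈ spectrum ℂ (Atil.map (algebraMap ℝ ℂ)), μ.re < 0) :=
  stmt4_general A hreal hdiag hrank V hV hΓ Atil hAtil
end

section
/- Let $A \in \mathbb{R}^{N\times N}$ be diagonalizable with real eigenvalues, such that $A$ has one simple zero eigenvalue with right eigenvector $\mathbf{1}_N$ and left eigenvector $\Gamma = (V_1, \dots, V_N)$, $V_i > 0$, and all other eigenvalues of $A$ are strictly negative. Then for any constant $m \in \mathbb{R}$ and any solution $x$ of $\dot{x} = Ax + Bm$ with $\Gamma B = V := \sum_i V_i$, the function $t \mapsto x(t) - \big(\frac{1}{V}\Gamma x(t)\big)\mathbf{1}_N$ converges as $t \to \infty$ to a constant vector depending linearly on $m$. -/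
open Matrix Filter

private lemma expSol15 {f : ℝ → ℝ} {d : ℝ} (h : ∀ t, HasDerivAt f (d * f t) t) (t : ℝ) :
    f t = Real.exp (d * t) * f 0 := by
  have hg : ∀ s : ℝ, HasDerivAt (fun u => Real.exp (-d * u) * f u) 0 s := by
    intro s
    have h1 : HasDerivAt (fun u : ℝ => Real.exp (-d * u)) (Real.exp (-d * s) * (-d)) s := by
      have := (Real.hasDerivAt_exp (-d * s)).comp s ((hasDerivAt_id s).const_mul (-d))
      simpa [Function.comp_def, mul_comm] using this
    have := h1.mul (h s)
    convert this using 1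
    · rfl
    · rfl
    · rfl
    · ring
  have hdiff : Differentiable ℝ (fun u => Real.exp (-d * u) * f u) :=
    fun s => (hg s).differentiableAt
  have hderiv : ∀ s, deriv (fun u => Real.exp (-d * u) * f u) s = 0 := fun s => (hg s).deriv
  have hconst := is_const_of_deriv_eq_zero hdiff hderiv t 0
  have h0 : Real.exp (-d * t) * f t = f 0 := by simpa using hconst
  have : Real.exp (d * t) * (Real.exp (-d * t) * f t) = Real.exp (d * t) * f 0 := by rw [h0]
  rwa [← mul_assoc, ← Real.exp_add, show d * t + -d * t = 0 by ring, Real.exp_zero,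
    one_mul] at this

private lemma hasDerivAt_mulVec15 {N : ℕ} (M : Matrix (Fin N) (Fin N) ℝ) {x : ℝ → Fin N → ℝ}
    {v : Fin N → ℝ} {t : ℝ} (hx : HasDerivAt x v t) :
    HasDerivAt (fun t => M.mulVec (x t)) (M.mulVec v) t := by
  have hc : HasFDerivAt (fun u : Fin N → ℝ => M.mulVec u)
      (M.mulVecLin.toContinuousLinearMap) (x t) :=
    M.mulVecLin.toContinuousLinearMap.hasFDerivAt
  exact hc.comp_hasDerivAt t hx

private lemma hasDerivAt_dot15 {N : ℕ} (V : Fin N → ℝ) {x : ℝ → Fin N → ℝ}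
    {v : Fin N → ℝ} {t : ℝ} (hx : HasDerivAt x v t) :
    HasDerivAt (fun t => V ⬝ᵥ x t) (V ⬝ᵥ v) t := by
  simp only [dotProduct]
  exact HasDerivAt.fun_sum fun i _ => ((hasDerivAt_pi.1 hx) i).const_mul (V i)

private lemma eig_nonpos15 {N : ℕ} (A : Matrix (Fin N) (Fin N) ℝ)
    (Pm : Matrix (Fin N) (Fin N) ℝ) (hPm : IsUnit Pm)
    (hD : (Pm⁻¹ * A * Pm).IsDiag)
    (hspec : ∀ μ ∈ spectrum ℂ (A.map (algebraMap ℝ ℂ)),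
      μ = 0 ∨ (μ.im = 0 ∧ μ.re < 0)) (i : Fin N) :
    (Pm⁻¹ * A * Pm) i i = 0 ∨ (Pm⁻¹ * A * Pm) i i < 0 := by
  set D := Pm⁻¹ * A * Pm with hDdef
  set d := D i i with hd
  have hdet : IsUnit Pm.det := (Matrix.isUnit_iff_isUnit_det Pm).mp hPm
  have hPP : Pm * Pm⁻¹ = 1 := Matrix.mul_nonsing_inv Pm hdet
  have hPP' : Pm⁻¹ * Pm = 1 := Matrix.nonsing_inv_mul Pm hdet
  have hAPm : A * Pm = Pm * D := by
    rw [hDdef]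
    rw [show Pm * (Pm⁻¹ * A * Pm) = Pm * Pm⁻¹ * A * Pm by noncomm_ring]
    rw [hPP, one_mul]
  set v : Fin N → ℝ := Pm.mulVec (Pi.single i 1) with hv
  have hv0 : v ≠ 0 := by
    intro h0
    have : Pm⁻¹.mulVec v = Pi.single i 1 := by
      rw [hv, Matrix.mulVec_mulVec, hPP', Matrix.one_mulVec]
    rw [h0, Matrix.mulVec_zero] at this
    have := congrFun this i
    simp at this
  have hDe : D.mulVec (Pi.single i 1) = d • (Pi.single i 1 : Fin N → ℝ) := by
    funext j
    simp only [Matrix.mulVec, dotProduct]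
    rw [Finset.sum_eq_single i]
    · by_cases hji : j = i
      · subst hji; simp [hd]
      · simp [Pi.single_apply, hji, hD hji]
    · intro k _ hk; simp [Pi.single_apply, hk]
    · simp
  have hAv : A.mulVec v = d • v := by
    rw [hv, Matrix.mulVec_mulVec, hAPm, ← Matrix.mulVec_mulVec, hDe, Matrix.mulVec_smul]
  have hdetR : (d • (1 : Matrix (Fin N) (Fin N) ℝ) - A).det = 0 := by
    rw [← Matrix.exists_mulVec_eq_zero_iff]
    refine ⟨v, hv0, ?_⟩
    rw [Matrix.sub_mulVec, Matrix.smul_mulVec, Matrix.one_mulVec, hAv, sub_self]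
  have hmem : (d : ℂ) ∈ spectrum ℂ (A.map (algebraMap ℝ ℂ)) := by
    rw [spectrum.mem_iff]
    intro hu
    have hdetC : ((d : ℂ) • (1 : Matrix (Fin N) (Fin N) ℂ)
        - A.map (algebraMap ℝ ℂ)).det = 0 := by
      have hmap : (d • (1 : Matrix (Fin N) (Fin N) ℝ) - A).map (algebraMap ℝ ℂ)
          = (d : ℂ) • (1 : Matrix (Fin N) (Fin N) ℂ) - A.map (algebraMap ℝ ℂ) := by
        ext j k
        simp [Matrix.map_apply, Matrix.one_apply, apply_ite]
      have hmd := (algebraMap ℝ ℂ).map_det (d • (1 : Matrix (Fin N) (Fin N) ℝ) - A)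
      rw [hdetR, map_zero, RingHom.mapMatrix_apply, hmap] at hmd
      exact hmd.symm
    rw [Algebra.algebraMap_eq_smul_one] at hu
    have := (Matrix.isUnit_iff_isUnit_det _).mp hu
    rw [hdetC] at this
    simp at this
  rcases hspec _ hmem with h0 | ⟨him, hre⟩
  · left
    exact_mod_cast congrArg Complex.re h0
  · right
    simpa using hre

/-- Convergence of the mismatch between the state and its weighted mean: if `A` is
diagonalizable with a simple zero eigenvalue (right eigenvector `1`, left eigenvector
`Γ = (V₁,…,V_N)` with `Vᵢ > 0`) and all other eigenvalues strictly negative, then for any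
constant input `m`, along any solution of `ẋ = A x + B m` with `Γ B = ∑ Vᵢ`, the mismatch
`x - (Γx/V) 1` converges to a constant vector depending linearly on `m`. -/
theorem stmt15 {N : ℕ} (A : Matrix (Fin N) (Fin N) ℝ)
    (V : Fin N → ℝ) (hV : ∀ i, 0 < V i)
    (hA1 : A.mulVec (fun _ => (1:ℝ)) = 0)
    (hΓA : Matrix.vecMul V A = 0)
    (hdiag : ∃ Pm : Matrix (Fin N) (Fin N) ℝ, IsUnit Pm ∧ (Pm⁻¹ * A * Pm).IsDiag)
    (hrank : A.rank = N - 1)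
    (hspec : ∀ μ ∈ spectrum ℂ (A.map (algebraMap ℝ ℂ)),
      μ = 0 ∨ (μ.im = 0 ∧ μ.re < 0))
    (B : Fin N → ℝ) (hB : V ⬝ᵥ B = ∑ i, V i) :
    ∃ zlin : Fin N → ℝ, ∀ m : ℝ, ∀ x : ℝ → Fin N → ℝ,
      (∀ t, HasDerivAt x (A.mulVec (x t) + m • B) t) →
      Tendsto (fun t => x t - ((V ⬝ᵥ x t) / (∑ i, V i)) • (fun _ => (1:ℝ)))
        atTop (nhds (m • zlin)) := by
  obtain rfl | hN := Nat.eq_zero_or_pos N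
  · refine ⟨0, fun m x hx => ?_⟩
    have : ∀ t : ℝ, (x t - ((V ⬝ᵥ x t) / (∑ i, V i)) • (fun _ => (1:ℝ)))
        = m • (0 : Fin 0 → ℝ) := fun t => Subsingleton.elim _ _
    simp only [this]
    exact tendsto_const_nhds
  obtain ⟨Pm, hPm, hD⟩ := hdiag
  set D := Pm⁻¹ * A * Pm with hDdef
  have hdet : IsUnit Pm.det := (Matrix.isUnit_iff_isUnit_det Pm).mp hPm
  have hPP : Pm * Pm⁻¹ = 1 := Matrix.mul_nonsing_inv Pm hdet
  have hPP' : Pm⁻¹ * Pm = 1 := Matrix.nonsing_inv_mul Pm hdet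
  have hAPm : A * Pm = Pm * D := by
    rw [hDdef, show Pm * (Pm⁻¹ * A * Pm) = Pm * Pm⁻¹ * A * Pm by noncomm_ring, hPP, one_mul]
  have hPA : Pm⁻¹ * A = D * Pm⁻¹ := by
    rw [hDdef, show Pm⁻¹ * A * Pm * Pm⁻¹ = Pm⁻¹ * A * (Pm * Pm⁻¹) by noncomm_ring, hPP, mul_one]
  have hd : ∀ i, D i i = 0 ∨ D i i < 0 := eig_nonpos15 A Pm hPm hD hspec
  -- positivity of total weight
  have hne : (Finset.univ : Finset (Fin N)).Nonempty := ⟨⟨0, hN⟩, Finset.mem_univ _⟩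
  have hVtot : 0 < ∑ i, V i := Finset.sum_pos (fun i _ => hV i) hne
  set Vtot := ∑ i, V i with hVt
  set ones : Fin N → ℝ := fun _ => (1:ℝ) with honesdef
  have hones : V ⬝ᵥ ones = Vtot := by simp [honesdef, dotProduct, hVt]
  -- the dot-with-V functional
  set f : (Fin N → ℝ) →ₗ[ℝ] ℝ :=
    { toFun := fun u => V ⬝ᵥ u
      map_add' := fun u w => dotProduct_add V u w
      map_smul' := fun c u => by simp [dotProduct_smul] } with hf
  have hfsurj : LinearMap.range f = ⊤ := by
    rw [LinearMap.range_eq_top]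
    intro r
    refine ⟨(r / Vtot) • ones, ?_⟩
    simp only [hf, LinearMap.coe_mk, AddHom.coe_mk, dotProduct_smul, hones, smul_eq_mul]
    field_simp
  have hkerf : Module.finrank ℝ (LinearMap.ker f) = N - 1 := by
    have := f.finrank_range_add_finrank_ker
    rw [hfsurj, finrank_top, Module.finrank_self, Module.finrank_pi, Fintype.card_fin] at this
    omega
  have hrangeA : LinearMap.range A.mulVecLin = LinearMap.ker f := by
    apply Submodule.eq_of_le_of_finrank_le
    · rintro u ⟨w, rfl⟩
      simp only [LinearMap.mem_ker, hf, LinearMap.coe_mk, AddHom.coe_mk, Matrix.mulVecLin_apply]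
      rw [Matrix.dotProduct_mulVec, hΓA, zero_dotProduct]
    · rw [hkerf]
      exact le_of_eq hrank.symm
  -- existence of z₀ with A z₀ = ones - B and V ⬝ᵥ z₀ = 0
  have hmem : (ones - B) ∈ LinearMap.ker f := by
    simp only [LinearMap.mem_ker, hf, LinearMap.coe_mk, AddHom.coe_mk, dotProduct_sub, hones, hB]
    ring
  rw [← hrangeA] at hmem
  obtain ⟨z', hz'⟩ := hmem
  rw [Matrix.mulVecLin_apply] at hz'
  set z₀ : Fin N → ℝ := z' - ((V ⬝ᵥ z') / Vtot) • ones with hz₀def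
  have hz₀A : A.mulVec z₀ = ones - B := by
    rw [hz₀def, Matrix.mulVec_sub, Matrix.mulVec_smul, hA1, smul_zero, sub_zero, hz']
  have hz₀V : V ⬝ᵥ z₀ = 0 := by
    rw [hz₀def, dotProduct_sub, dotProduct_smul, hones, smul_eq_mul]
    field_simp
    ring
  -- kernel of A is the span of ones
  have hones0 : ones ≠ (0 : Fin N → ℝ) := by
    intro h
    have := congrFun h ⟨0, hN⟩
    simpa [honesdef] using this
  have hkerA : LinearMap.ker A.mulVecLin = Submodule.span ℝ {ones} := by
    have hle : Submodule.span ℝ {ones} ≤ LinearMap.ker A.mulVecLin := by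
      rw [Submodule.span_singleton_le_iff_mem]
      simpa [LinearMap.mem_ker, Matrix.mulVecLin_apply] using hA1
    have hkerdim : Module.finrank ℝ (LinearMap.ker A.mulVecLin) = 1 := by
      have := A.mulVecLin.finrank_range_add_finrank_ker
      rw [Module.finrank_pi, Fintype.card_fin] at this
      rw [show Module.finrank ℝ (LinearMap.range A.mulVecLin) = A.rank from rfl] at this
      omega
    symm
    apply Submodule.eq_of_le_of_finrank_le hle
    rw [hkerdim, finrank_span_singleton hones0]
  refine ⟨z₀, fun m x hx => ?_⟩
  -- the shifted mismatch w
  set w : ℝ → Fin N → ℝ := fun t => x t - ((V ⬝ᵥ x t) / Vtot) • ones - m • z₀ with hwdef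
  have hw : ∀ t, HasDerivAt w (A.mulVec (w t)) t := by
    intro t
    have hsder : HasDerivAt (fun t => (V ⬝ᵥ x t) / Vtot) m t := by
      have h1 := (hasDerivAt_dot15 V (hx t)).div_const Vtot
      have h2 : (V ⬝ᵥ (A.mulVec (x t) + m • B)) / Vtot = m := by
        rw [dotProduct_add, Matrix.dotProduct_mulVec, hΓA, zero_dotProduct,
          dotProduct_smul, hB, smul_eq_mul, zero_add]
        field_simp
      rwa [h2] at h1
    have hder := ((hx t).sub (hsder.smul_const ones)).sub_const (m • z₀)
    have heq : A.mulVec (w t) = A.mulVec (x t) + m • B - m • ones := by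
      rw [hwdef]
      simp only [Matrix.mulVec_sub, Matrix.mulVec_smul, hA1, smul_zero, sub_zero, hz₀A,
        smul_sub]
      abel
    rw [heq]
    convert hder using 1
    all_goals rfl
  -- coordinates diagonalize
  set c : ℝ → Fin N → ℝ := fun t => Pm⁻¹.mulVec (w t) with hcdef
  have hwc : ∀ t, Pm.mulVec (c t) = w t := by
    intro t
    rw [hcdef, Matrix.mulVec_mulVec, hPP, Matrix.one_mulVec]
  have hci : ∀ i t, HasDerivAt (fun t => c t i) (D i i * c t i) t := by
    intro i t
    have h1 : HasDerivAt c (Pm⁻¹.mulVec (A.mulVec (w t))) t :=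
      hasDerivAt_mulVec15 Pm⁻¹ (hw t)
    have h2 : Pm⁻¹.mulVec (A.mulVec (w t)) = D.mulVec (c t) := by
      rw [Matrix.mulVec_mulVec, hPA, ← Matrix.mulVec_mulVec, hcdef]
    rw [h2] at h1
    have h3 := (hasDerivAt_pi.1 h1) i
    have h4 : D.mulVec (c t) i = D i i * c t i := by
      simp only [Matrix.mulVec, dotProduct]
      rw [Finset.sum_eq_single i]
      · intro k _ hk; rw [hD (by exact fun h => hk (by simpa using h.symm) : i ≠ k), zero_mul]
      · simp
    rwa [h4] at h3
  have hcsol : ∀ i t, c t i = Real.exp (D i i * t) * c 0 i := by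
    intro i t
    exact expSol15 (fun s => hci i s) t
  set climit : Fin N → ℝ := fun i => if D i i = 0 then c 0 i else 0 with hclimdef
  have hctend : Tendsto c atTop (nhds climit) := by
    rw [tendsto_pi_nhds]
    intro i
    have : (fun t => c t i) = fun t => Real.exp (D i i * t) * c 0 i := funext (hcsol i)
    rw [this]
    rcases hd i with h0 | hneg
    · simp only [hclimdef, h0, if_pos rfl, zero_mul, Real.exp_zero, one_mul]
      exact tendsto_const_nhds
    · have h1 : Tendsto (fun t : ℝ => (-(D i i)) * t) atTop atTop :=
        Tendsto.const_mul_atTop (by linarith) tendsto_id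
      have h2 : Tendsto (fun t : ℝ => D i i * t) atTop atBot := by
        have := tendsto_neg_atTop_atBot.comp h1
        simpa [Function.comp_def] using this
      have h3 : Tendsto (fun t : ℝ => Real.exp (D i i * t)) atTop (nhds 0) :=
        Real.tendsto_exp_atBot.comp h2
      have h4 := h3.mul_const (c 0 i)
      rw [zero_mul] at h4
      simpa [hclimdef, if_neg (ne_of_lt hneg)] using h4
  set L : Fin N → ℝ := Pm.mulVec climit with hLdef
  have hwtend : Tendsto w atTop (nhds L) := by
    have hcont : Continuous (fun u : Fin N → ℝ => Pm.mulVec u) :=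
      Pm.mulVecLin.toContinuousLinearMap.continuous
    have := (hcont.tendsto climit).comp hctend
    simp only [Function.comp_def, hwc] at this
    exact this
  -- L = 0
  have hLker : A.mulVec L = 0 := by
    have hDcl : D.mulVec climit = 0 := by
      funext j
      simp only [Matrix.mulVec, dotProduct, Pi.zero_apply]
      apply Finset.sum_eq_zero
      intro k _
      by_cases hkj : j = k
      · subst hkj
        rcases hd j with h0 | hneg
        · rw [h0, zero_mul]
        · rw [hclimdef]; simp [if_neg (ne_of_lt hneg)]
      · rw [hD hkj, zero_mul]
    rw [hLdef, Matrix.mulVec_mulVec, hAPm, ← Matrix.mulVec_mulVec, hDcl, Matrix.mulVec_zero]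
  have hLV : V ⬝ᵥ L = 0 := by
    have hw0 : ∀ t, V ⬝ᵥ w t = 0 := by
      intro t
      rw [hwdef]
      simp only [dotProduct_sub, dotProduct_smul, hones, hz₀V, smul_eq_mul, mul_zero]
      field_simp
      ring
    have hcontf : Continuous (fun u : Fin N → ℝ => V ⬝ᵥ u) :=
      f.toContinuousLinearMap.continuous
    have h1 : Tendsto (fun t => V ⬝ᵥ w t) atTop (nhds (V ⬝ᵥ L)) :=
      (hcontf.tendsto L).comp hwtend
    have h2 : Tendsto (fun t => V ⬝ᵥ w t) atTop (nhds 0) := by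
      simp only [hw0]; exact tendsto_const_nhds
    exact tendsto_nhds_unique h1 h2
  have hL0 : L = 0 := by
    have hLmem : L ∈ LinearMap.ker A.mulVecLin := by
      simpa [LinearMap.mem_ker, Matrix.mulVecLin_apply] using hLker
    rw [hkerA, Submodule.mem_span_singleton] at hLmem
    obtain ⟨α, hα⟩ := hLmem
    have : V ⬝ᵥ (α • ones) = 0 := by rw [← hα] at hLV; exact hLV
    rw [dotProduct_smul, hones, smul_eq_mul] at this
    have hα0 : α = 0 := by
      rcases mul_eq_zero.mp this with h | h
      · exact h
      · exact absurd h (ne_of_gt hVtot)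
    rw [← hα, hα0, zero_smul]
  rw [hL0] at hwtend
  have hfinal := hwtend.add_const (m • z₀)
  rw [zero_add] at hfinal
  have : (fun t => x t - ((V ⬝ᵥ x t) / Vtot) • ones) = fun t => w t + m • z₀ := by
    funext t
    rw [hwdef]
    module
  rw [hVt] at this ⊢
  rw [show (fun t => x t - (V ⬝ᵥ x t / ∑ i, V i) • ones) = fun t => w t + m • z₀ from this]
  exact hfinal
end
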